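/- For every odd integer n ≥ 9, the graph on vertices v_1, …, v_n whose edge set consists of: the cycle v_1v_2⋯v_{n−2}v_1; the chord v_1v_3; an edge from v_{n−1} to each of v_1, v_3, v_4, …, v_{n−2}; the three edges v_2v_{n−2}, v_2v_4, v_4v_{n−2}; and an edge from v_n to each of v_4, v_5, …, v_{n−2}, is a Hamiltonian, Eulerian (all degrees even) graph with exactly 3n − 6 edges that is triangle decomposable. -/

import Mathlib

/-- A triangle on three distinct vertices, as a multiset of edges. -/
def IsTriangle {V : Type*} (t : Multiset (Sym2 V)) : Prop :=
  ∃ a b c : V, a ≠ b ∧ b ≠ c ∧ a ≠ c ∧ t = {s(a, b), s(b, c), s(a, c)}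

/-- A multigraph (multiset of edges) is triangle decomposable if it is a sum of triangles. -/
def TriDecomp {V : Type*} (E : Multiset (Sym2 V)) : Prop :=
  ∃ T : Multiset (Multiset (Sym2 V)), (∀ t ∈ T, IsTriangle t) ∧ T.sum = E

/-- The edge multiset of a simple graph on a finite vertex type. -/
noncomputable def edgeMS {V : Type*} [Fintype V] (G : SimpleGraph V) : Multiset (Sym2 V) :=
  G.edgeSet.toFinite.toFinset.val

/-- `ε_Δ(G)`: the least number of duplicated edges of `G` (a multiset of edges of `G`,
repetitions allowed) whose addition makes the edge multiset triangle decomposable. -/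
noncomputable def epsDelta {V : Type*} [Fintype V] (G : SimpleGraph V) : ℕ :=
  sInf {k | ∃ D : Multiset (Sym2 V), D.card = k ∧ (∀ e ∈ D, e ∈ G.edgeSet) ∧
    TriDecomp (edgeMS G + D)}

/-- The graph on vertices `v_1, …, v_n` (zero-indexed: `v_i` is `i - 1 : Fin n`) whose
edges are: the cycle `v_1 v_2 ⋯ v_{n-2} v_1`; the chord `v_1 v_3`; an edge from `v_{n-1}`
to each of `v_1, v_3, v_4, …, v_{n-2}`; the edges `v_2 v_{n-2}`, `v_2 v_4`, `v_4 v_{n-2}`;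
and an edge from `v_n` to each of `v_4, v_5, …, v_{n-2}`. -/
def oddMaxPlanar (n : ℕ) (hn : 9 ≤ n) : SimpleGraph (Fin n) :=
  SimpleGraph.fromEdgeSet
    {e | (∃ i : ℕ, ∃ _h : i + 1 ≤ n - 3, e = s(⟨i, by omega⟩, ⟨i + 1, by omega⟩)) ∨
         e = s(⟨n - 3, by omega⟩, ⟨0, by omega⟩) ∨
         e = s(⟨0, by omega⟩, ⟨2, by omega⟩) ∨
         e = s(⟨n - 2, by omega⟩, ⟨0, by omega⟩) ∨
         (∃ j : ℕ, ∃ _h1 : 2 ≤ j, ∃ _h2 : j ≤ n - 3,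
            e = s(⟨n - 2, by omega⟩, ⟨j, by omega⟩)) ∨
         e = s(⟨1, by omega⟩, ⟨n - 3, by omega⟩) ∨
         e = s(⟨1, by omega⟩, ⟨3, by omega⟩) ∨
         e = s(⟨3, by omega⟩, ⟨n - 3, by omega⟩) ∨
         (∃ j : ℕ, ∃ _h1 : 3 ≤ j, ∃ _h2 : j ≤ n - 3,
            e = s(⟨n - 1, by omega⟩, ⟨j, by omega⟩))}

/-!
A Hamiltonian cycle is `v_1 v_2 v_3 v_4 v_n v_5 v_6 ⋯ v_{n-3} v_{n-1} v_{n-2} v_1`; it is the image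
of the cycle graph under a relabelling of the vertices.

The edges split into the `n - 2` triangles `v_1 v_2 v_3`, `v_2 v_4 v_{n-2}`, `v_1 v_{n-2} v_{n-1}`
and, for `3 ≤ k ≤ n - 3`, `v_k v_{k+1} w_k`, where the apex `w_k` is `v_{n-1}` for odd `k` and `v_n`
for even `k`. As `n` is odd, the last of these uses `v_n`, which leaves the edge `v_{n-2} v_{n-1}` to
the triangle `v_1 v_{n-2} v_{n-1}`, so no edge is used twice. A triangle meets every vertex in zero
or two edges, so the decomposition makes all degrees even, and it has `3 (n - 2)` edges.
-/

open SimpleGraph Fin.NatCast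

section Triangles

variable {V : Type*}

def triangleEdges (a b c : V) : Multiset (Sym2 V) :=
  {s(a, b), s(b, c), s(a, c)}

lemma isTriangle_triangleEdges {a b c : V} (hab : a ≠ b) (hbc : b ≠ c) (hac : a ≠ c) :
    IsTriangle (triangleEdges a b c) :=
  ⟨a, b, c, hab, hbc, hac, rfl⟩

lemma mk_mem_triangleEdges {a b c x y : V} (hab : a ≠ b) (hbc : b ≠ c) (hac : a ≠ c) :
    s(x, y) ∈ triangleEdges a b c ↔
      x ≠ y ∧ (x = a ∨ x = b ∨ x = c) ∧ (y = a ∨ y = b ∨ y = c) := by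
  simp only [triangleEdges, Multiset.insert_eq_cons, Multiset.mem_cons, Multiset.mem_singleton,
    Sym2.eq_iff]
  grind

lemma nodup_triangleEdges {a b c : V} (hab : a ≠ b) (hbc : b ≠ c) (hac : a ≠ c) :
    (triangleEdges a b c).Nodup := by
  simp only [triangleEdges, Multiset.insert_eq_cons, Multiset.nodup_cons, Multiset.mem_cons,
    Multiset.mem_singleton, Multiset.nodup_singleton, Sym2.eq_iff]
  grind

lemma triangleEdges_subset_edgeSet {G : SimpleGraph V} {a b c : V} (hab : G.Adj a b)
    (hbc : G.Adj b c) (hac : G.Adj a c) : ∀ e ∈ triangleEdges a b c, e ∈ G.edgeSet := by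
  simp only [triangleEdges, Multiset.insert_eq_cons, Multiset.mem_cons, Multiset.mem_singleton]
  rintro e (rfl | rfl | rfl) <;> assumption

lemma IsTriangle.card_eq_three {t : Multiset (Sym2 V)} (ht : IsTriangle t) : t.card = 3 := by
  obtain ⟨a, b, c, -, -, -, rfl⟩ := ht
  rfl

lemma IsTriangle.even_countP_mem [DecidableEq V] {t : Multiset (Sym2 V)} (ht : IsTriangle t)
    (v : V) : Even (t.countP (v ∈ ·)) := by
  obtain ⟨a, b, c, hab, hbc, hac, rfl⟩ := ht
  simp only [Multiset.insert_eq_cons, ← Multiset.cons_zero (s(a, c)), Multiset.countP_cons,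
    Multiset.countP_zero, Sym2.mem_iff]
  by_cases ha : v = a <;> by_cases hb : v = b <;> by_cases hc : v = c <;> subst_vars <;>
    simp_all [eq_comm]

lemma card_sum_of_isTriangle {T : Multiset (Multiset (Sym2 V))} (hT : ∀ t ∈ T, IsTriangle t) :
    T.sum.card = 3 * T.card := by
  rw [← Multiset.join, Multiset.card_join,
    Multiset.map_congr rfl fun t ht => (hT t ht).card_eq_three, Multiset.map_const',
    Multiset.sum_replicate, smul_eq_mul, mul_comm]

lemma TriDecomp.even_countP_mem [DecidableEq V] {E : Multiset (Sym2 V)} (hE : TriDecomp E)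
    (v : V) : Even (E.countP (v ∈ ·)) := by
  obtain ⟨T, hT, rfl⟩ := hE
  induction T using Multiset.induction with
  | empty => simp
  | cons t T ih =>
    rw [Multiset.sum_cons, Multiset.countP_add]
    exact ((hT t (Multiset.mem_cons_self t T)).even_countP_mem v).add
      (ih fun s hs => hT s (Multiset.mem_cons_of_mem hs))

end Triangles

section EdgeMultiset

variable {V : Type*} [Fintype V]

lemma mem_edgeMS {G : SimpleGraph V} {e : Sym2 V} : e ∈ edgeMS G ↔ e ∈ G.edgeSet := by
  rw [edgeMS, Finset.mem_val, Set.Finite.mem_toFinset]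

lemma nodup_edgeMS (G : SimpleGraph V) : (edgeMS G).Nodup :=
  Finset.nodup _

lemma ncard_neighborSet_eq_countP_edgeMS [DecidableEq V] (G : SimpleGraph V) (v : V) :
    (G.neighborSet v).ncard = (edgeMS G).countP (v ∈ ·) := by
  classical
  have : edgeMS G = G.edgeFinset.val := by
    rw [edgeMS, Set.Finite.toFinset_eq_toFinset]
    rfl
  rw [this, Multiset.countP_eq_card_filter, ← Finset.filter_val, Finset.card_val,
    ← incidenceFinset_eq_filter, card_incidenceFinset_eq_degree, Set.ncard_eq_toFinset_card',
    ← card_neighborFinset_eq_degree]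
  rfl

lemma TriDecomp.even_ncard_neighborSet {G : SimpleGraph V} (hG : TriDecomp (edgeMS G)) (v : V) :
    Even (G.neighborSet v).ncard := by
  classical
  rw [ncard_neighborSet_eq_countP_edgeMS]
  exact hG.even_countP_mem v

end EdgeMultiset

namespace SimpleGraph

lemma cycleGraph.isHamiltonianCycle_cycle (m : ℕ) : (cycleGraph.cycle m).IsHamiltonianCycle :=
  Walk.isHamiltonianCycle_iff_isCycle_and_length_eq.mpr ⟨cycleGraph.isCycle_cycle, by simp⟩

lemma IsHamiltonian.of_bijective_of_adj_add_one {V : Type*} [Fintype V] [DecidableEq V]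
    {G : SimpleGraph V} {m : ℕ} (f : Fin (m + 3) → V) (hf : f.Bijective)
    (hadj : ∀ i, G.Adj (f i) (f (i + 1))) : G.IsHamiltonian := by
  let φ : cycleGraph (m + 3) →g G := ⟨f, fun {u v} huv => by
    rcases cycleGraph_adj.mp huv with h | h
    · rw [sub_eq_iff_eq_add'] at h
      exact h ▸ (hadj v).symm
    · rw [sub_eq_iff_eq_add'] at h
      exact h ▸ hadj u⟩
  exact fun _ => ⟨f 0, (cycleGraph.cycle m).map φ, (cycleGraph.isHamiltonianCycle_cycle m).map hf⟩

end SimpleGraph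

/-- The edge families in the definition of `oddMaxPlanar n`, one orientation each, on the
zero-based labels (`a` stands for `v_{a+1}`). -/
inductive OddMaxPlanarEdge (n a b : ℕ) : Prop
  | cycle : b = a + 1 → b ≤ n - 3 → OddMaxPlanarEdge n a b
  | cycleClose : a = n - 3 → b = 0 → OddMaxPlanarEdge n a b
  | chord : a = 0 → b = 2 → OddMaxPlanarEdge n a b
  | hubZero : a = n - 2 → b = 0 → OddMaxPlanarEdge n a b
  | hub : a = n - 2 → 2 ≤ b → b ≤ n - 3 → OddMaxPlanarEdge n a b
  | innerOne : a = 1 → b = n - 3 → OddMaxPlanarEdge n a b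
  | innerTwo : a = 1 → b = 3 → OddMaxPlanarEdge n a b
  | innerThree : a = 3 → b = n - 3 → OddMaxPlanarEdge n a b
  | hub' : a = n - 1 → 3 ≤ b → b ≤ n - 3 → OddMaxPlanarEdge n a b

lemma OddMaxPlanarEdge.adj {n : ℕ} [NeZero n] (hn : 9 ≤ n) {a b : ℕ}
    (h : OddMaxPlanarEdge n a b) : (oddMaxPlanar n hn).Adj (a : Fin n) (b : Fin n) := by
  have ha : (a : Fin n).val = a := Fin.val_cast_of_lt (by cases h <;> omega)
  have hb : (b : Fin n).val = b := Fin.val_cast_of_lt (by cases h <;> omega)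
  rw [oddMaxPlanar, fromEdgeSet_adj, Set.mem_ofPred_eq, ne_eq, Fin.ext_iff, ha, hb]
  refine ⟨?_, by cases h <;> omega⟩
  simp only [Sym2.eq_iff, Fin.ext_iff, ha, hb]
  cases h with
  | cycle h₁ h₂ => exact .inl ⟨a, by omega, .inl ⟨rfl, h₁⟩⟩
  | cycleClose h₁ h₂ => exact .inr <| .inl <| .inl ⟨h₁, h₂⟩
  | chord h₁ h₂ => exact .inr <| .inr <| .inl <| .inl ⟨h₁, h₂⟩
  | hubZero h₁ h₂ => exact .inr <| .inr <| .inr <| .inl <| .inl ⟨h₁, h₂⟩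
  | hub h₁ h₂ h₃ => exact .inr <| .inr <| .inr <| .inr <| .inl ⟨b, h₂, h₃, .inl ⟨h₁, rfl⟩⟩
  | innerOne h₁ h₂ => exact .inr <| .inr <| .inr <| .inr <| .inr <| .inl <| .inl ⟨h₁, h₂⟩
  | innerTwo h₁ h₂ => exact .inr <| .inr <| .inr <| .inr <| .inr <| .inr <| .inl <| .inl ⟨h₁, h₂⟩
  | innerThree h₁ h₂ =>
    exact .inr <| .inr <| .inr <| .inr <| .inr <| .inr <| .inr <| .inl <| .inl ⟨h₁, h₂⟩
  | hub' h₁ h₂ h₃ =>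
    exact .inr <| .inr <| .inr <| .inr <| .inr <| .inr <| .inr <| .inr ⟨b, h₂, h₃, .inl ⟨h₁, rfl⟩⟩

section Hamiltonian

variable {n : ℕ}

/-- Position `k` of the Hamiltonian cycle `v_1 v_2 v_3 v_4 v_n v_5 ⋯ v_{n-3} v_{n-1} v_{n-2}`, as a
zero-based label. -/
def oddMaxPlanarCycleVertex (n k : ℕ) : ℕ :=
  if k ≤ 3 then k else if k = 4 then n - 1 else if k ≤ n - 3 then k - 1
  else if k = n - 2 then n - 2 else n - 3

lemma oddMaxPlanarCycleVertex_lt {k : ℕ} (hk : k < n) :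
    oddMaxPlanarCycleVertex n k < n := by
  unfold oddMaxPlanarCycleVertex
  split_ifs <;> omega

lemma oddMaxPlanarCycleVertex_injOn (hn : 9 ≤ n) :
    Set.InjOn (oddMaxPlanarCycleVertex n) (Set.Iio n) := by
  intro k hk l hl h
  simp only [Set.mem_Iio] at hk hl
  unfold oddMaxPlanarCycleVertex at h
  split_ifs at h <;> omega

lemma oddMaxPlanarEdge_cycleVertex_succ (hn : 9 ≤ n) {k : ℕ} (hk : k + 1 < n) :
    OddMaxPlanarEdge n (oddMaxPlanarCycleVertex n k) (oddMaxPlanarCycleVertex n (k + 1)) ∨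
      OddMaxPlanarEdge n (oddMaxPlanarCycleVertex n (k + 1)) (oddMaxPlanarCycleVertex n k) := by
  unfold oddMaxPlanarCycleVertex
  rcases (by omega : k ≤ 2 ∨ k = 3 ∨ k = 4 ∨ 5 ≤ k ∧ k ≤ n - 4 ∨ k = n - 3 ∨ k = n - 2)
    with hk | hk | hk | hk | hk | hk <;> split_ifs <;> try omega
  · exact .inl (.cycle (by omega) (by omega))
  · exact .inr (.hub' (by omega) (by omega) (by omega))
  · exact .inl (.hub' (by omega) (by omega) (by omega))
  · exact .inl (.cycle (by omega) (by omega))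
  · exact .inr (.hub (by omega) (by omega) (by omega))
  · exact .inl (.hub (by omega) (by omega) (by omega))

lemma oddMaxPlanarEdge_cycleVertex_last (hn : 9 ≤ n) :
    OddMaxPlanarEdge n (oddMaxPlanarCycleVertex n (n - 1)) (oddMaxPlanarCycleVertex n 0) := by
  refine .cycleClose ?_ (by simp [oddMaxPlanarCycleVertex])
  unfold oddMaxPlanarCycleVertex
  split_ifs <;> omega

theorem oddMaxPlanar_isHamiltonian (hn : 9 ≤ n) : (oddMaxPlanar n hn).IsHamiltonian := by
  obtain ⟨m, rfl⟩ : ∃ m, n = m + 3 := ⟨n - 3, by omega⟩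
  refine IsHamiltonian.of_bijective_of_adj_add_one
    (fun i : Fin (m + 3) => (oddMaxPlanarCycleVertex (m + 3) i : Fin (m + 3))) ?_ fun i => ?_
  · refine Finite.injective_iff_bijective.mp fun i j hij => Fin.ext ?_
    have := congrArg Fin.val hij
    simp only [Fin.val_cast_of_lt (oddMaxPlanarCycleVertex_lt i.isLt),
      Fin.val_cast_of_lt (oddMaxPlanarCycleVertex_lt j.isLt)] at this
    exact oddMaxPlanarCycleVertex_injOn hn i.isLt j.isLt this
  · rw [Fin.val_add_one]
    split_ifs with hi
    · subst hi
      exact (oddMaxPlanarEdge_cycleVertex_last hn).adj hn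
    · rcases oddMaxPlanarEdge_cycleVertex_succ hn (k := i) (by simpa using Fin.val_lt_last hi)
        with h | h
      exacts [h.adj hn, (h.adj hn).symm]

end Hamiltonian

def labelTriangle (n : ℕ) [NeZero n] (a b c : ℕ) : Multiset (Sym2 (Fin n)) :=
  triangleEdges (a : Fin n) b c

section LabelTriangle

variable {n a b c : ℕ} [NeZero n]

lemma labelTriangle_corners_ne (hab : a < b) (hbc : b < c) (hc : c < n) :
    (a : Fin n) ≠ b ∧ (b : Fin n) ≠ c ∧ (a : Fin n) ≠ c := by
  simp only [ne_eq, Fin.ext_iff, Fin.val_cast_of_lt hc, Fin.val_cast_of_lt (hbc.trans hc),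
    Fin.val_cast_of_lt ((hab.trans hbc).trans hc)]
  omega

lemma isTriangle_labelTriangle (hab : a < b) (hbc : b < c) (hc : c < n) :
    IsTriangle (labelTriangle n a b c) :=
  have h := labelTriangle_corners_ne hab hbc hc
  isTriangle_triangleEdges h.1 h.2.1 h.2.2

lemma nodup_labelTriangle (hab : a < b) (hbc : b < c) (hc : c < n) :
    (labelTriangle n a b c).Nodup :=
  have h := labelTriangle_corners_ne hab hbc hc
  nodup_triangleEdges h.1 h.2.1 h.2.2

lemma mk_mem_labelTriangle (hab : a < b) (hbc : b < c) (hc : c < n) {u v : Fin n} :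
    s(u, v) ∈ labelTriangle n a b c ↔
      (u : ℕ) ≠ v ∧ ((u : ℕ) = a ∨ (u : ℕ) = b ∨ (u : ℕ) = c) ∧
        ((v : ℕ) = a ∨ (v : ℕ) = b ∨ (v : ℕ) = c) := by
  have h := labelTriangle_corners_ne hab hbc hc
  rw [labelTriangle, mk_mem_triangleEdges h.1 h.2.1 h.2.2]
  simp only [ne_eq, Fin.ext_iff, Fin.val_cast_of_lt hc, Fin.val_cast_of_lt (hbc.trans hc),
    Fin.val_cast_of_lt ((hab.trans hbc).trans hc)]

end LabelTriangle

/-- The triangles of the decomposition, indexed by `i < n - 2`, in zero-based labels; the apex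
`n - 2 + i % 2` of the generic triangle alternates between the two hubs `v_{n-1}` and `v_n`. -/
def oddMaxPlanarTriangle (n : ℕ) [NeZero n] (i : ℕ) : Multiset (Sym2 (Fin n)) :=
  if i = 0 then labelTriangle n 0 1 2
  else if i = 1 then labelTriangle n 1 3 (n - 3)
  else if i = n - 3 then labelTriangle n 0 (n - 3) (n - 2)
  else labelTriangle n i (i + 1) (n - 2 + i % 2)

def oddMaxPlanarTriangles (n : ℕ) [NeZero n] : Multiset (Multiset (Sym2 (Fin n))) :=
  (Multiset.range (n - 2)).map (oddMaxPlanarTriangle n)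

section OddMaxPlanarTriangle

variable {n : ℕ} [NeZero n]

lemma oddMaxPlanarTriangle_zero : oddMaxPlanarTriangle n 0 = labelTriangle n 0 1 2 :=
  rfl

lemma oddMaxPlanarTriangle_one : oddMaxPlanarTriangle n 1 = labelTriangle n 1 3 (n - 3) :=
  rfl

lemma oddMaxPlanarTriangle_sub_three (hn : 5 ≤ n) :
    oddMaxPlanarTriangle n (n - 3) = labelTriangle n 0 (n - 3) (n - 2) := by
  rw [oddMaxPlanarTriangle, if_neg (by omega), if_neg (by omega), if_pos rfl]

lemma oddMaxPlanarTriangle_of_two_le_of_le {i : ℕ} (hi₂ : 2 ≤ i) (hi : i ≤ n - 4) :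
    oddMaxPlanarTriangle n i = labelTriangle n i (i + 1) (n - 2 + i % 2) := by
  rw [oddMaxPlanarTriangle, if_neg (by omega), if_neg (by omega), if_neg (by omega)]

lemma isTriangle_oddMaxPlanarTriangle (hn : 9 ≤ n) {i : ℕ} (hi : i < n - 2) :
    IsTriangle (oddMaxPlanarTriangle n i) := by
  unfold oddMaxPlanarTriangle
  split_ifs <;> exact isTriangle_labelTriangle (by omega) (by omega) (by omega)

lemma nodup_oddMaxPlanarTriangle (hn : 9 ≤ n) {i : ℕ} (hi : i < n - 2) :
    (oddMaxPlanarTriangle n i).Nodup := by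
  unfold oddMaxPlanarTriangle
  split_ifs <;> exact nodup_labelTriangle (by omega) (by omega) (by omega)

lemma disjoint_oddMaxPlanarTriangle (hn : 9 ≤ n) (hodd : Odd n) {i j : ℕ} (hij : i < j)
    (hj : j < n - 2) : Disjoint (oddMaxPlanarTriangle n i) (oddMaxPlanarTriangle n j) := by
  rw [Nat.odd_iff] at hodd
  refine Multiset.disjoint_left.mpr fun {e} hei hej => ?_
  induction e using Sym2.ind with
  | _ u v =>
    unfold oddMaxPlanarTriangle at hei hej
    split_ifs at hei hej <;> rw [mk_mem_labelTriangle] at hei hej <;> omega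

lemma oddMaxPlanarTriangle_subset_edgeSet (hn : 9 ≤ n) {i : ℕ} (hi : i < n - 2) :
    ∀ e ∈ oddMaxPlanarTriangle n i, e ∈ (oddMaxPlanar n hn).edgeSet := by
  unfold oddMaxPlanarTriangle labelTriangle
  split_ifs
  · exact triangleEdges_subset_edgeSet (OddMaxPlanarEdge.cycle rfl (by omega) |>.adj hn)
      (OddMaxPlanarEdge.cycle rfl (by omega) |>.adj hn) (OddMaxPlanarEdge.chord rfl rfl |>.adj hn)
  · exact triangleEdges_subset_edgeSet (OddMaxPlanarEdge.innerTwo rfl rfl |>.adj hn)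
      (OddMaxPlanarEdge.innerThree rfl rfl |>.adj hn) (OddMaxPlanarEdge.innerOne rfl rfl |>.adj hn)
  · exact triangleEdges_subset_edgeSet (OddMaxPlanarEdge.cycleClose rfl rfl |>.adj hn).symm
      (OddMaxPlanarEdge.hub rfl (by omega) le_rfl |>.adj hn).symm
      (OddMaxPlanarEdge.hubZero rfl rfl |>.adj hn).symm
  · have hcycle := OddMaxPlanarEdge.cycle (n := n) (a := i) rfl (by omega) |>.adj hn
    rcases Nat.mod_two_eq_zero_or_one i with h | h
    · exact triangleEdges_subset_edgeSet hcycle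
        (OddMaxPlanarEdge.hub (by omega) (by omega) (by omega) |>.adj hn).symm
        (OddMaxPlanarEdge.hub (by omega) (by omega) (by omega) |>.adj hn).symm
    · exact triangleEdges_subset_edgeSet hcycle
        (OddMaxPlanarEdge.hub' (by omega) (by omega) (by omega) |>.adj hn).symm
        (OddMaxPlanarEdge.hub' (by omega) (by omega) (by omega) |>.adj hn).symm

lemma exists_mem_oddMaxPlanarTriangle (hn : 9 ≤ n) (hodd : Odd n) {u v : Fin n}
    (huv : (oddMaxPlanar n hn).Adj u v) : ∃ i < n - 2, s(u, v) ∈ oddMaxPlanarTriangle n i := by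
  rw [Nat.odd_iff] at hodd
  rw [oddMaxPlanar, fromEdgeSet_adj] at huv
  simp only [Set.mem_ofPred_eq, Sym2.eq_iff, Fin.ext_iff] at huv
  rcases huv.1 with ⟨i, hi, h⟩ | h | h | h | ⟨j, hj₁, hj₂, h⟩ | h | h | h | ⟨j, hj₁, hj₂, h⟩
  · obtain hi₁ | hi₁ := le_or_gt i 1
    · exact ⟨0, by omega, by rw [oddMaxPlanarTriangle_zero, mk_mem_labelTriangle] <;> omega⟩
    · refine ⟨i, by omega, ?_⟩
      rw [oddMaxPlanarTriangle_of_two_le_of_le, mk_mem_labelTriangle] <;> omega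
  · refine ⟨n - 3, by omega, ?_⟩
    rw [oddMaxPlanarTriangle_sub_three (by omega), mk_mem_labelTriangle] <;> omega
  · exact ⟨0, by omega, by rw [oddMaxPlanarTriangle_zero, mk_mem_labelTriangle] <;> omega⟩
  · refine ⟨n - 3, by omega, ?_⟩
    rw [oddMaxPlanarTriangle_sub_three (by omega), mk_mem_labelTriangle] <;> omega
  · obtain rfl | hj := eq_or_ne j (n - 3)
    · refine ⟨n - 3, by omega, ?_⟩
      rw [oddMaxPlanarTriangle_sub_three (by omega), mk_mem_labelTriangle] <;> omega
    · refine ⟨j - j % 2, by omega, ?_⟩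
      rw [oddMaxPlanarTriangle_of_two_le_of_le, mk_mem_labelTriangle] <;> omega
  · exact ⟨1, by omega, by rw [oddMaxPlanarTriangle_one, mk_mem_labelTriangle] <;> omega⟩
  · exact ⟨1, by omega, by rw [oddMaxPlanarTriangle_one, mk_mem_labelTriangle] <;> omega⟩
  · exact ⟨1, by omega, by rw [oddMaxPlanarTriangle_one, mk_mem_labelTriangle] <;> omega⟩
  · refine ⟨j - (j + 1) % 2, by omega, ?_⟩
    rw [oddMaxPlanarTriangle_of_two_le_of_le, mk_mem_labelTriangle] <;> omega

lemma sum_oddMaxPlanarTriangles :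
    (oddMaxPlanarTriangles n).sum = (Multiset.range (n - 2)).bind (oddMaxPlanarTriangle n) :=
  rfl

lemma isTriangle_of_mem_oddMaxPlanarTriangles (hn : 9 ≤ n) :
    ∀ t ∈ oddMaxPlanarTriangles n, IsTriangle t := by
  simp only [oddMaxPlanarTriangles, Multiset.mem_map, Multiset.mem_range]
  rintro _ ⟨i, hi, rfl⟩
  exact isTriangle_oddMaxPlanarTriangle hn hi

lemma nodup_sum_oddMaxPlanarTriangles (hn : 9 ≤ n) (hodd : Odd n) :
    (oddMaxPlanarTriangles n).sum.Nodup := by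
  rw [sum_oddMaxPlanarTriangles, Multiset.nodup_bind]
  refine ⟨fun i hi => nodup_oddMaxPlanarTriangle hn (Multiset.mem_range.mp hi),
    List.range (n - 2), rfl, List.pairwise_lt_range.imp_of_mem fun _ hj hij => ?_⟩
  exact disjoint_oddMaxPlanarTriangle hn hodd hij (List.mem_range.mp hj)

theorem edgeMS_oddMaxPlanar (hn : 9 ≤ n) (hodd : Odd n) :
    edgeMS (oddMaxPlanar n hn) = (oddMaxPlanarTriangles n).sum := by
  refine (Multiset.Nodup.ext (nodup_edgeMS _) (nodup_sum_oddMaxPlanarTriangles hn hodd)).mpr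
    fun e => ?_
  rw [mem_edgeMS, sum_oddMaxPlanarTriangles, Multiset.mem_bind]
  constructor
  · induction e using Sym2.ind with
    | _ u v =>
      intro huv
      obtain ⟨i, hi, h⟩ := exists_mem_oddMaxPlanarTriangle hn hodd huv
      exact ⟨i, Multiset.mem_range.mpr hi, h⟩
  · rintro ⟨i, hi, he⟩
    exact oddMaxPlanarTriangle_subset_edgeSet hn (Multiset.mem_range.mp hi) e he

end OddMaxPlanarTriangle

/-- For every odd `n ≥ 9`, the above graph is a Hamiltonian, Eulerian (all degrees even)
graph with exactly `3n - 6` edges that is triangle decomposable. -/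
theorem oddMaxPlanar_hamiltonian_eulerian_triDecomp (n : ℕ) (hn : 9 ≤ n) (hno : Odd n) :
    (oddMaxPlanar n hn).IsHamiltonian ∧
    (∀ v, Even (((oddMaxPlanar n hn).neighborSet v).ncard)) ∧
    (edgeMS (oddMaxPlanar n hn)).card = 3 * n - 6 ∧
    TriDecomp (edgeMS (oddMaxPlanar n hn)) := by
  have : NeZero n := ⟨by omega⟩
  have htri := isTriangle_of_mem_oddMaxPlanarTriangles (n := n) hn
  have hdecomp : TriDecomp (edgeMS (oddMaxPlanar n hn)) :=
    ⟨_, htri, (edgeMS_oddMaxPlanar hn hno).symm⟩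
  refine ⟨oddMaxPlanar_isHamiltonian hn, hdecomp.even_ncard_neighborSet, ?_, hdecomp⟩
  rw [edgeMS_oddMaxPlanar hn hno, card_sum_of_isTriangle htri, oddMaxPlanarTriangles,
    Multiset.card_map, Multiset.card_range]
  omega
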